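/- arXiv:2406.06360 — 4 statements merged into one kernel-verified Lean document; each statement's English description precedes it below -/
import Mathlib

section
/- Let U and V be unitary operators and O a Hermitian operator, and let k be a positive integer. Then ‖V^k O (V†)^k − (UV)^k O (V† U†)^k‖ ≤ Σ_{j=1}^{k} ‖V^j O (V†)^j − U V^j O (V†)^j U†‖. -/
open scoped Matrix.Norms.L2Operator Matrix

/-!
Conjugation by `W` is a map `c_W X = W X W†`, with `c_U ∘ c_V = c_{UV}` and `c_W^[k] X = Wᵏ X (W†)ᵏ`.
Conjugation by an isometry does not increase the operator norm (C⋆-identity), so `c_{UV}` is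
1-Lipschitz. The bound is then the triangle inequality in any metric space: comparing the
orbits of `x` under `G` and under `F ∘ G`, step `j` contributes at most `dist (Gʲ x) (F (Gʲ x))`,
and the errors accumulated earlier are not amplified by the 1-Lipschitz map `F ∘ G`.
-/

theorem dist_iterate_le_sum_dist_iterate {X : Type*} [PseudoMetricSpace X] (F G : X → X)
    (hFG : LipschitzWith 1 (F ∘ G)) (x : X) (k : ℕ) :
    dist (G^[k] x) ((F ∘ G)^[k] x) ≤ ∑ j ∈ Finset.Icc 1 k, dist (G^[j] x) (F (G^[j] x)) := by
  induction k with
  | zero => simp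
  | succ k ih =>
    have hstep : dist ((F ∘ G) (G^[k] x)) ((F ∘ G) ((F ∘ G)^[k] x)) ≤
        dist (G^[k] x) ((F ∘ G)^[k] x) := by
      simpa using hFG.dist_le_mul (G^[k] x) ((F ∘ G)^[k] x)
    rw [Finset.sum_Icc_succ_top (Nat.le_add_left 1 k)]
    calc dist (G^[k + 1] x) ((F ∘ G)^[k + 1] x)
        ≤ dist (G^[k + 1] x) (F (G^[k + 1] x)) +
            dist ((F ∘ G) (G^[k] x)) ((F ∘ G) ((F ∘ G)^[k] x)) := by
          rw [Function.iterate_succ_apply' (F ∘ G), Function.iterate_succ_apply' G]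
          exact dist_triangle _ _ _
      _ ≤ _ := by linarith

section StarConj

variable {R : Type*}

def starConj [Monoid R] [StarMul R] (W X : R) : R :=
  W * X * star W

theorem starConj_comp_starConj [Monoid R] [StarMul R] (U V : R) :
    starConj U ∘ starConj V = starConj (U * V) := by
  ext X
  simp only [Function.comp_apply, starConj, star_mul, mul_assoc]

theorem iterate_starConj [Monoid R] [StarMul R] (W : R) (k : ℕ) (X : R) :
    (starConj W)^[k] X = W ^ k * X * star W ^ k := by
  induction k with
  | zero => simp
  | succ k ih =>
    rw [Function.iterate_succ_apply', ih, starConj, pow_succ', pow_succ]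
    simp only [mul_assoc]

variable [NormedRing R] [StarRing R] [CStarRing R]

theorem norm_mul_of_star_mul_self_eq_one {W : R} (hW : star W * W = 1) (X : R) :
    ‖W * X‖ = ‖X‖ := by
  rw [← sq_eq_sq₀ (norm_nonneg _) (norm_nonneg _), sq, sq, ← CStarRing.norm_star_mul_self,
    ← CStarRing.norm_star_mul_self, star_mul, mul_assoc, ← mul_assoc (star W), hW, one_mul]

theorem norm_starConj_of_star_mul_self_eq_one {W : R} (hW : star W * W = 1) (X : R) :
    ‖starConj W X‖ = ‖X‖ := by
  rw [starConj, mul_assoc, norm_mul_of_star_mul_self_eq_one hW, ← norm_star, star_mul,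
    star_star, norm_mul_of_star_mul_self_eq_one hW, norm_star]

theorem lipschitzWith_starConj_of_star_mul_self_eq_one {W : R} (hW : star W * W = 1) :
    LipschitzWith 1 (starConj W) :=
  LipschitzWith.of_dist_le_mul fun X Y => by
    rw [dist_eq_norm, dist_eq_norm, starConj, starConj, ← sub_mul, ← mul_sub, ← starConj,
      norm_starConj_of_star_mul_self_eq_one hW, NNReal.coe_one, one_mul]

end StarConj

theorem telescoping_bound_general {n : ℕ} (U V O : Matrix (Fin n) (Fin n) ℂ)
    (hU₁ : Uᴴ * U = 1) (hV₁ : Vᴴ * V = 1) (k : ℕ) :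
    ‖V ^ k * O * Vᴴ ^ k - (U * V) ^ k * O * (Vᴴ * Uᴴ) ^ k‖ ≤
      ∑ j ∈ Finset.Icc 1 k, ‖V ^ j * O * Vᴴ ^ j - U * (V ^ j * O * Vᴴ ^ j) * Uᴴ‖ := by
  rw [← Matrix.star_eq_conjTranspose] at hU₁ hV₁
  have hUV : star (U * V) * (U * V) = 1 := by
    rw [star_mul, mul_assoc, ← mul_assoc (star U), hU₁, one_mul, hV₁]
  have hlip : LipschitzWith 1 (starConj U ∘ starConj V) := by
    rw [starConj_comp_starConj]
    exact lipschitzWith_starConj_of_star_mul_self_eq_one hUV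
  simpa only [starConj_comp_starConj, iterate_starConj, dist_eq_norm, starConj, star_mul,
    Matrix.star_eq_conjTranspose] using dist_iterate_le_sum_dist_iterate _ _ hlip O k

/-- Telescoping bound: for unitary `U`, `V`, Hermitian `O` and `k ≥ 1`,
`‖Vᵏ O (V†)ᵏ − (UV)ᵏ O (V†U†)ᵏ‖ ≤ Σ_{j=1}^k ‖Vʲ O (V†)ʲ − U Vʲ O (V†)ʲ U†‖`. -/
theorem telescoping_bound {n : ℕ} (U V O : Matrix (Fin n) (Fin n) ℂ)
    (hU₁ : Uᴴ * U = 1) (hU₂ : U * Uᴴ = 1)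
    (hV₁ : Vᴴ * V = 1) (hV₂ : V * Vᴴ = 1)
    (hO : O.IsHermitian) (k : ℕ) (hk : 1 ≤ k) :
    ‖V ^ k * O * Vᴴ ^ k - (U * V) ^ k * O * (Vᴴ * Uᴴ) ^ k‖ ≤
      ∑ j ∈ Finset.Icc 1 k, ‖V ^ j * O * Vᴴ ^ j - U * (V ^ j * O * Vᴴ ^ j) * Uᴴ‖ :=
  telescoping_bound_general U V O hU₁ hV₁ k
end

section
/- For positive definite unit-trace matrices A and B, the trace of the circle product satisfies Tr[exp(log A + log B)] ≤ λ_max(A), where λ_max(A) is the largest eigenvalue of A. -/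
open scoped Matrix ComplexOrder

/-!
Let `w₁, …, wₙ` be an orthonormal eigenbasis of `log A + log B`, with eigenvalues `μᵢ`, so that
`Tr exp(log A + log B) = ∑ exp μᵢ` and `μᵢ = ⟪wᵢ, log A wᵢ⟫ + ⟪wᵢ, log B wᵢ⟫`. For a unit vector `w`
and a positive definite `C`, the numbers `|⟪uₖ, w⟫|²` (with `uₖ` an eigenbasis of `C`) form a
probability vector, so Jensen's inequality for `exp` gives `exp ⟪w, log C w⟫ ≤ ⟪w, C w⟫`, and
`⟪w, A w⟫ ≤ λ_max(A)`. Hence `exp μᵢ ≤ λ_max(A) ⟪wᵢ, B wᵢ⟫`, and summing over `i` gives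
`λ_max(A) Tr B = λ_max(A)`.
-/

namespace Matrix

variable {ι 𝕜 : Type*} [Fintype ι] [DecidableEq ι] [RCLike 𝕜]

lemma sum_norm_sq_apply_eq_one {U : Matrix ι ι 𝕜} (hU : U ∈ unitaryGroup ι 𝕜) (i : ι) :
    ∑ k, ‖U k i‖ ^ 2 = 1 := by
  have h : (star U * U) i i = 1 := by rw [Unitary.star_mul_self_of_mem hU, one_apply_eq]
  simp only [mul_apply, star_apply, ← starRingEnd_apply, RCLike.conj_mul] at h
  exact_mod_cast h

lemma trace_star_mul_mul {U : Matrix ι ι 𝕜} (hU : U ∈ unitaryGroup ι 𝕜) (A : Matrix ι ι 𝕜) :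
    (star U * A * U).trace = A.trace := by
  rw [trace_mul_cycle, Unitary.mul_star_self_of_mem hU, one_mul]

namespace IsHermitian

variable {A : Matrix ι ι 𝕜} (hA : A.IsHermitian)

lemma isHermitian_cfc (f : ℝ → ℝ) : (hA.cfc f).IsHermitian := by
  rw [← hA.cfc_eq]
  exact cfc_predicate f A

lemma cfc_id : hA.cfc id = A := by
  rw [← hA.cfc_eq]
  exact _root_.cfc_id ℝ A hA.isSelfAdjoint

lemma trace_cfc (f : ℝ → ℝ) : (hA.cfc f).trace = ∑ i, (f (hA.eigenvalues i) : 𝕜) := by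
  rw [IsHermitian.cfc, Unitary.conjStarAlgAut_apply, trace_mul_cycle, Unitary.coe_star_mul_self,
    one_mul, trace_diagonal]
  rfl

lemma exp_eq_cfc_exp : NormedSpace.exp A = hA.cfc Real.exp := by
  have hU : IsUnit (hA.eigenvectorUnitary : Matrix ι ι 𝕜) :=
    (Unitary.toUnits hA.eigenvectorUnitary).isUnit
  have hinv : (hA.eigenvectorUnitary : Matrix ι ι 𝕜)⁻¹ = star hA.eigenvectorUnitary.1 :=
    inv_eq_left_inv (Unitary.coe_star_mul_self _)
  conv_lhs => rw [hA.spectral_theorem, Unitary.conjStarAlgAut_apply]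
  rw [IsHermitian.cfc, Unitary.conjStarAlgAut_apply, ← hinv, exp_conj _ _ hU, exp_diagonal]
  congr 3
  funext k
  simp only [Pi.exp_def, Function.comp_apply, Real.exp_eq_exp_ℝ]
  exact (NormedSpace.algebraMap_exp_comm _).symm

lemma star_eigenvectorUnitary_mul_mul_apply_self (i : ι) :
    (star (hA.eigenvectorUnitary : Matrix ι ι 𝕜) * A * hA.eigenvectorUnitary) i i =
      hA.eigenvalues i := by
  simpa using congrFun₂ hA.conjStarAlgAut_star_eigenvectorUnitary i i

lemma star_mul_cfc_mul_apply_self (f : ℝ → ℝ) (W : Matrix ι ι 𝕜) (i : ι) :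
    (star W * hA.cfc f * W) i i =
      ((∑ k, f (hA.eigenvalues k) *
        ‖(star (hA.eigenvectorUnitary : Matrix ι ι 𝕜) * W) k i‖ ^ 2 : ℝ) : 𝕜) := by
  set V := star (hA.eigenvectorUnitary : Matrix ι ι 𝕜) * W
  have : star W * hA.cfc f * W = star V * diagonal (RCLike.ofReal ∘ f ∘ hA.eigenvalues) * V := by
    simp only [IsHermitian.cfc, Unitary.conjStarAlgAut_apply, V, star_mul, star_star,
      Matrix.mul_assoc]
  rw [this, mul_apply]
  push_cast
  refine Finset.sum_congr rfl fun k _ => ?_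
  simp only [mul_diagonal, star_apply, Function.comp_apply, ← starRingEnd_apply]
  rw [mul_comm _ (V k i), ← mul_assoc, RCLike.mul_conj, mul_comm]

lemma star_mul_mul_apply_self (W : Matrix ι ι 𝕜) (i : ι) :
    (star W * A * W) i i =
      ((∑ k, hA.eigenvalues k *
        ‖(star (hA.eigenvectorUnitary : Matrix ι ι 𝕜) * W) k i‖ ^ 2 : ℝ) : 𝕜) := by
  conv_lhs => rw [← hA.cfc_id]
  exact hA.star_mul_cfc_mul_apply_self id W i

lemma sum_norm_sq_star_eigenvectorUnitary_mul_apply {W : Matrix ι ι 𝕜}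
    (hW : W ∈ unitaryGroup ι 𝕜) (i : ι) :
    ∑ k, ‖(star (hA.eigenvectorUnitary : Matrix ι ι 𝕜) * W) k i‖ ^ 2 = 1 :=
  sum_norm_sq_apply_eq_one (mul_mem (Unitary.star_mem hA.eigenvectorUnitary.2) hW) i

lemma re_star_mul_mul_apply_self_le_iSup_eigenvalues {W : Matrix ι ι 𝕜}
    (hW : W ∈ unitaryGroup ι 𝕜) (i : ι) :
    RCLike.re ((star W * A * W) i i) ≤ ⨆ k, hA.eigenvalues k := by
  have hp := hA.sum_norm_sq_star_eigenvectorUnitary_mul_apply hW i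
  rw [hA.star_mul_mul_apply_self, RCLike.ofReal_re]
  calc _ ≤ ∑ k, (⨆ l, hA.eigenvalues l) *
          ‖(star (hA.eigenvectorUnitary : Matrix ι ι 𝕜) * W) k i‖ ^ 2 :=
        Finset.sum_le_sum fun k _ => mul_le_mul_of_nonneg_right
          (le_ciSup (Set.finite_range _).bddAbove k) (sq_nonneg _)
    _ = ⨆ k, hA.eigenvalues k := by rw [← Finset.mul_sum, hp, mul_one]

end IsHermitian

lemma PosDef.exp_re_star_mul_cfc_log_mul_apply_self_le {A : Matrix ι ι 𝕜} (hA : A.PosDef)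
    {W : Matrix ι ι 𝕜} (hW : W ∈ unitaryGroup ι 𝕜) (i : ι) :
    Real.exp (RCLike.re ((star W * hA.1.cfc Real.log * W) i i)) ≤
      RCLike.re ((star W * A * W) i i) := by
  set p := fun k => ‖(star (hA.1.eigenvectorUnitary : Matrix ι ι 𝕜) * W) k i‖ ^ 2
  have hp : ∑ k, p k = 1 := hA.1.sum_norm_sq_star_eigenvectorUnitary_mul_apply hW i
  rw [hA.1.star_mul_mul_apply_self, hA.1.star_mul_cfc_mul_apply_self, RCLike.ofReal_re,
    RCLike.ofReal_re]
  calc Real.exp (∑ k, Real.log (hA.1.eigenvalues k) * p k)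
      = Real.exp (∑ k, p k • Real.log (hA.1.eigenvalues k)) := by
        simp only [smul_eq_mul, mul_comm]
    _ ≤ ∑ k, p k • Real.exp (Real.log (hA.1.eigenvalues k)) :=
        convexOn_exp.map_sum_le (fun k _ => sq_nonneg _) hp fun k _ => Set.mem_univ _
    _ = ∑ k, hA.1.eigenvalues k * p k := by
        simp only [smul_eq_mul, Real.exp_log (hA.eigenvalues_pos _), mul_comm]

end Matrix

open Matrix

theorem trace_circleProd_le_lambdaMax_general {n : ℕ}
    (A B : Matrix (Fin n) (Fin n) ℂ)
    (hA : A.PosDef) (hB : B.PosDef)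
    (htB : B.trace = 1) :
    (NormedSpace.exp (hA.1.cfc Real.log + hB.1.cfc Real.log)).trace ≤
      ((⨆ i, hA.1.eigenvalues i : ℝ) : ℂ) := by
  set M := hA.1.cfc Real.log + hB.1.cfc Real.log
  have hM : M.IsHermitian := (hA.1.isHermitian_cfc _).add (hB.1.isHermitian_cfc _)
  set W := (hM.eigenvectorUnitary : Matrix (Fin n) (Fin n) ℂ)
  have hW : W ∈ unitaryGroup (Fin n) ℂ := hM.eigenvectorUnitary.2
  have hμ : ∀ i, hM.eigenvalues i = RCLike.re ((star W * hA.1.cfc Real.log * W) i i) +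
      RCLike.re ((star W * hB.1.cfc Real.log * W) i i) := by
    intro i
    have h := congrArg RCLike.re (hM.star_eigenvectorUnitary_mul_mul_apply_self i)
    simp only [M, Matrix.mul_add, Matrix.add_mul, Matrix.add_apply, map_add,
      RCLike.ofReal_re] at h
    exact h.symm
  have htrB : ∑ i, RCLike.re ((star W * B * W) i i) = 1 := by
    have h : ∑ i, (star W * B * W) i i = 1 := (trace_star_mul_mul hW B).trans htB
    rw [← map_sum, h, RCLike.one_re]
  rw [hM.exp_eq_cfc_exp, hM.trace_cfc, ← RCLike.ofReal_sum]
  refine RCLike.ofReal_le_ofReal.mpr ?_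
  calc ∑ i, Real.exp (hM.eigenvalues i)
      = ∑ i, Real.exp (RCLike.re ((star W * hA.1.cfc Real.log * W) i i)) *
          Real.exp (RCLike.re ((star W * hB.1.cfc Real.log * W) i i)) := by
        simp only [hμ, Real.exp_add]
    _ ≤ ∑ i, (⨆ i, hA.1.eigenvalues i) * RCLike.re ((star W * B * W) i i) := by
        refine Finset.sum_le_sum fun i _ => ?_
        have hexpA := (hA.exp_re_star_mul_cfc_log_mul_apply_self_le hW i).trans
          (hA.1.re_star_mul_mul_apply_self_le_iSup_eigenvalues hW i)
        exact mul_le_mul hexpA (hB.exp_re_star_mul_cfc_log_mul_apply_self_le hW i)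
          (Real.exp_pos _).le ((Real.exp_pos _).le.trans hexpA)
    _ = ⨆ i, hA.1.eigenvalues i := by rw [← Finset.mul_sum, htrB, mul_one]

/-- For positive definite unit-trace matrices `A`, `B`, the trace of the circle product
satisfies `Tr[exp(log A + log B)] ≤ λ_max(A)`. -/
theorem trace_circleProd_le_lambdaMax {n : ℕ} [NeZero n]
    (A B : Matrix (Fin n) (Fin n) ℂ)
    (hA : A.PosDef) (hB : B.PosDef)
    (htA : A.trace = 1) (htB : B.trace = 1) :
    (NormedSpace.exp (hA.1.cfc Real.log + hB.1.cfc Real.log)).trace ≤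
      ((⨆ i, hA.1.eigenvalues i : ℝ) : ℂ) :=
  trace_circleProd_le_lambdaMax_general A B hA hB htB
end

section
/- The integral ∫_0^∞ t·log(coth(t)) dt equals 7ζ(3)/16, where ζ is the Riemann zeta function; in particular it is strictly less than 9/16. -/
/-!
For `t > 0` put `q = e^{-2t}`; then `coth t = (1 + q) / (1 - q)`, so
`log coth t = ∑ₖ 2 q^(2k+1) / (2k+1)`. The integral is the Mellin transform of this series at
`s = 2`, which may be taken termwise: the `k`-th term contributes
`Γ(2) · (2 / (2k+1)) / (2(2k+1))² = 1 / (2(2k+1)³)`. Summing over odd integers gives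
`½ (1 - 2⁻³) ζ(3) = 7ζ(3)/16`. The bound follows from `ζ(3) ≤ 5/4`, obtained by telescoping
`1/m³ ≤ 1/((m-1)m(m+1)) = 1/(2(m-1)m) - 1/(2m(m+1))`.
-/

open Real MeasureTheory Set Finset

theorem cosh_div_sinh_eq (t : ℝ) :
    cosh t / sinh t = (1 + exp (-(2 * t))) / (1 - exp (-(2 * t))) := by
  have h : exp t * exp (-(2 * t)) = exp (-t) := by rw [← exp_add]; ring_nf
  rw [cosh_eq, sinh_eq, div_div_div_cancel_right₀ two_ne_zero]
  conv_rhs => rw [← mul_div_mul_left _ _ (exp_ne_zero t), mul_add, mul_sub, mul_one, h]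

theorem hasSum_log_cosh_div_sinh {t : ℝ} (ht : 0 < t) :
    HasSum (fun k : ℕ => 2 / (2 * k + 1) * exp (-(2 * (2 * k + 1)) * t))
      (log (cosh t / sinh t)) := by
  have hq : |exp (-(2 * t))| < 1 := by
    rw [abs_of_pos (exp_pos _), exp_lt_one_iff]; linarith
  have hq' : exp (-(2 * t)) < 1 := (le_abs_self _).trans_lt hq
  rw [cosh_div_sinh_eq, log_div (by positivity) (by linarith)]
  convert hasSum_log_sub_log_of_abs_lt_one hq using 2 with k
  rw [← exp_nat_mul]
  push_cast
  ring_nf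

theorem hasSum_one_div_odd_pow {p : ℕ} (hp : 1 < p) :
    HasSum (fun k : ℕ => 1 / (2 * k + 1 : ℝ) ^ p)
      ((1 - 1 / 2 ^ p) * ∑' n : ℕ, 1 / (n : ℝ) ^ p) := by
  set f : ℕ → ℝ := fun n => 1 / (n : ℝ) ^ p
  have hf : HasSum f (∑' n, f n) := (summable_one_div_nat_pow.mpr hp).hasSum
  have heven : HasSum (fun k => f (2 * k)) (1 / 2 ^ p * ∑' n, f n) :=
    (hf.mul_left _).congr_fun fun k => by
      simp only [f]; push_cast; rw [mul_pow, one_div_mul_one_div]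
  have hodd : Summable (fun k => f (2 * k + 1)) :=
    hf.summable.comp_injective fun a b h => by simpa using h
  have hsplit := hf.unique (heven.even_add_odd hodd.hasSum)
  convert hodd.hasSum using 1
  · funext k; simp only [f]; push_cast; rfl
  · linear_combination hsplit

theorem mellin_ofReal_two (f : ℝ → ℝ) :
    mellin (fun t => (f t : ℂ)) 2 = ((∫ t in Ioi 0, t * f t : ℝ) : ℂ) := by
  rw [mellin, ← integral_complex_ofReal]
  refine setIntegral_congr_fun measurableSet_Ioi fun t _ => ?_
  norm_num

theorem hasSum_integral_mul_log_cosh_div_sinh :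
    HasSum (fun k : ℕ => 1 / (2 * (2 * k + 1 : ℝ) ^ 3))
      (∫ t in Ioi 0, t * log (cosh t / sinh t)) := by
  have hterm (k : ℕ) :
      2 / (2 * k + 1) / (2 * (2 * k + 1)) ^ 2 = 1 / (2 * (2 * k + 1 : ℝ) ^ 3) := by
    field_simp
  have h := hasSum_mellin (a := fun k : ℕ => ((2 / (2 * k + 1) : ℝ) : ℂ))
    (p := fun k : ℕ => 2 * (2 * k + 1)) (F := fun t => (log (cosh t / sinh t) : ℂ)) (s := 2)
    (fun k => Or.inr (by positivity)) (by norm_num)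
    (fun t ht => by exact_mod_cast Complex.hasSum_ofReal.mpr (hasSum_log_cosh_div_sinh ht)) ?_
  · rw [mellin_ofReal_two] at h
    rw [← Complex.hasSum_ofReal]
    refine h.congr_fun fun k => ?_
    rw [← hterm]
    norm_num
  · refine ((hasSum_one_div_odd_pow (p := 3) (by norm_num)).summable.mul_left (1 / 2)).congr
      fun k => ?_
    rw [Complex.norm_real, Real.norm_of_nonneg (by positivity), Complex.re_ofNat, rpow_two, hterm,
      one_div_mul_one_div]

theorem integral_mul_log_cosh_div_sinh :
    ∫ t in Ioi 0, t * log (cosh t / sinh t) = 7 / 16 * ∑' n : ℕ, 1 / (n : ℝ) ^ 3 := by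
  have hodd := (hasSum_one_div_odd_pow (p := 3) (by norm_num)).mul_left (1 / 2)
  rw [hasSum_integral_mul_log_cosh_div_sinh.unique
    (hodd.congr_fun fun k => by rw [one_div_mul_one_div])]
  ring

theorem sum_range_one_div_nat_pow_three_le (n : ℕ) :
    ∑ i ∈ range (n + 2), 1 / (i : ℝ) ^ 3 ≤ 5 / 4 - 1 / (2 * ((n : ℝ) + 1) * (n + 2)) := by
  induction n with
  | zero => norm_num [sum_range_succ]
  | succ n ih =>
    have hstep : 1 / ((n : ℝ) + 2) ^ 3 ≤
        1 / (2 * (n + 1) * (n + 2)) - 1 / (2 * (n + 1 + 1) * (n + 1 + 2)) := by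
      rw [div_sub_div _ _ (by positivity) (by positivity),
        div_le_div_iff₀ (by positivity) (by positivity)]
      nlinarith [(n.cast_nonneg : (0 : ℝ) ≤ n)]
    rw [sum_range_succ]
    push_cast
    linarith

theorem tsum_one_div_nat_pow_three_le : ∑' n : ℕ, 1 / (n : ℝ) ^ 3 ≤ 5 / 4 := by
  refine Real.tsum_le_of_sum_range_le (fun _ => by positivity) fun n => ?_
  calc ∑ i ∈ range n, 1 / (i : ℝ) ^ 3
      ≤ ∑ i ∈ range (n + 2), 1 / (i : ℝ) ^ 3 :=
        sum_le_sum_of_subset_of_nonneg (range_subset_range.mpr (by omega))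
          fun _ _ _ => by positivity
    _ ≤ 5 / 4 - 1 / (2 * ((n : ℝ) + 1) * (n + 2)) := sum_range_one_div_nat_pow_three_le n
    _ ≤ 5 / 4 := sub_le_self _ (by positivity)

/-- `∫_0^∞ t log(coth t) dt = 7ζ(3)/16`, and in particular it is strictly less than `9/16`. -/
theorem integral_mul_log_coth :
    (((∫ t in Set.Ioi (0 : ℝ), t * Real.log (Real.cosh t / Real.sinh t)) : ℝ) : ℂ) =
        7 * riemannZeta 3 / 16 ∧
      (∫ t in Set.Ioi (0 : ℝ), t * Real.log (Real.cosh t / Real.sinh t)) < 9 / 16 := by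
  have hζ : riemannZeta 3 = ((∑' n : ℕ, 1 / (n : ℝ) ^ 3 : ℝ) : ℂ) := by
    rw [← Nat.cast_ofNat, zeta_nat_eq_tsum_of_gt_one (by norm_num), Complex.ofReal_tsum]
    push_cast
    rfl
  rw [integral_mul_log_cosh_div_sinh]
  refine ⟨?_, ?_⟩
  · rw [hζ]; push_cast; ring
  · linarith [tsum_one_div_nat_pow_three_le]
end

section
/- For D ≥ 1 and β, π as usual, ∫_D^∞ t · log(coth(πt/(2β))) dt ≤ 4(βD/π + β²/π²) e^{−πD/β}. -/
/-! Since `log x ≤ x - 1`, `log (coth u) ≤ coth u - 1 = 2e^{-2u} / (1 - e^{-2u}) ≤ 4e^{-2u}` as soon as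
`e^{-2u} ≤ 1/2`. With `u = πt/(2β)` the integrand is therefore dominated by `4t e^{-πt/β}`, whose
tail integral `∫_D^∞ t e^{-ct} dt = (D/c + 1/c²) e^{-cD}` is explicit. -/

open Real MeasureTheory Filter Set

namespace Real

lemma log_cosh_div_sinh_nonneg {u : ℝ} (hu : 0 < u) : 0 ≤ log (cosh u / sinh u) :=
  log_nonneg ((one_le_div (sinh_pos_iff.2 hu)).2 (sinh_lt_cosh u).le)

lemma log_cosh_div_sinh_le {u : ℝ} (hu : log 2 ≤ 2 * u) :
    log (cosh u / sinh u) ≤ 4 * exp (-(2 * u)) := by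
  have hsinh : 0 < sinh u := sinh_pos_iff.2 (by linarith [log_pos one_lt_two])
  have hhalf : exp (-(2 * u)) ≤ 1 / 2 := by
    calc exp (-(2 * u)) ≤ exp (-log 2) := exp_le_exp.2 (neg_le_neg hu)
      _ = 1 / 2 := by rw [exp_neg, exp_log two_pos, one_div]
  have hsq : exp (-(2 * u)) = exp (-u) * exp (-u) := by rw [← exp_add]; ring_nf
  have hinv : exp (-u) * exp u = 1 := by rw [← exp_add]; simp
  calc log (cosh u / sinh u) ≤ cosh u / sinh u - 1 := log_le_sub_one_of_pos (by positivity)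
    _ = exp (-u) / sinh u := by rw [div_sub_one hsinh.ne', cosh_sub_sinh]
    _ ≤ 4 * exp (-(2 * u)) := by
      rw [div_le_iff₀ hsinh, sinh_eq]
      nlinarith [exp_pos (-u), exp_pos u]

end Real

section TailIntegral

variable {c : ℝ}

lemma hasDerivAt_neg_add_mul_exp_neg_mul (hc : c ≠ 0) (t : ℝ) :
    HasDerivAt (fun t => -(t / c + 1 / c ^ 2) * exp (-(c * t))) (t * exp (-(c * t))) t := by
  have hlin : HasDerivAt (fun t => -(t / c + 1 / c ^ 2)) (-(1 / c)) t :=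
    (((hasDerivAt_id t).div_const c).add_const _).neg
  have hexp : HasDerivAt (fun t => exp (-(c * t))) (exp (-(c * t)) * -c) t := by
    simpa using ((hasDerivAt_id t).const_mul c).neg.exp
  refine (hlin.mul hexp).congr_deriv ?_
  field_simp
  ring

lemma tendsto_neg_add_mul_exp_neg_mul_atTop (hc : 0 < c) :
    Tendsto (fun t => -(t / c + 1 / c ^ 2) * exp (-(c * t))) atTop (nhds 0) := by
  have hct : Tendsto (fun t => c * t) atTop atTop := tendsto_id.const_mul_atTop hc
  have hx : Tendsto (fun x : ℝ => x * exp (-x)) atTop (nhds 0) := by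
    simpa using tendsto_pow_mul_exp_neg_atTop_nhds_zero 1
  have hlim := ((hx.comp hct).const_mul (1 / c ^ 2)).add
    ((tendsto_exp_neg_atTop_nhds_zero.comp hct).const_mul (1 / c ^ 2))
  simp only [mul_zero, add_zero] at hlim
  convert hlim.neg using 1
  · ext t
    simp only [Function.comp]
    field_simp
  · simp

variable {D : ℝ}

lemma integrableOn_Ioi_mul_exp_neg_mul (hc : 0 < c) (hD : 0 ≤ D) :
    IntegrableOn (fun t => t * exp (-(c * t))) (Ioi D) :=
  integrableOn_Ioi_deriv_of_nonneg' (fun t _ => hasDerivAt_neg_add_mul_exp_neg_mul hc.ne' t)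
    (fun _ ht => mul_nonneg (hD.trans ht.le) (exp_pos _).le)
    (tendsto_neg_add_mul_exp_neg_mul_atTop hc)

lemma integral_Ioi_mul_exp_neg_mul (hc : 0 < c) (hD : 0 ≤ D) :
    ∫ t in Ioi D, t * exp (-(c * t)) = (D / c + 1 / c ^ 2) * exp (-(c * D)) := by
  rw [integral_Ioi_of_hasDerivAt_of_nonneg'
    (fun t _ => hasDerivAt_neg_add_mul_exp_neg_mul hc.ne' t)
    (fun t ht => mul_nonneg (hD.trans ht.le) (exp_pos _).le)
    (tendsto_neg_add_mul_exp_neg_mul_atTop hc)]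
  ring

end TailIntegral

theorem integral_tail_log_coth_bound_general (β D : ℝ) (hβ : 0 < β)
    (hπD : 1 ≤ π * D / (2 * β)) :
    (∫ t in Set.Ioi D, t * Real.log (Real.cosh (π * t / (2 * β)) / Real.sinh (π * t / (2 * β)))) ≤
      4 * (β * D / π + β ^ 2 / π ^ 2) * Real.exp (-π * D / β) := by
  have hc : 0 < π / β := div_pos pi_pos hβ
  have hD : 0 ≤ D := by
    by_contra! h
    have := div_neg_of_neg_of_pos (mul_neg_of_pos_of_neg pi_pos h) (mul_pos two_pos hβ)
    linarith
  have hu : ∀ t ∈ Ioi D, 1 ≤ π * t / (2 * β) := fun t ht =>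
    hπD.trans (by gcongr; exact ht.le)
  calc (∫ t in Ioi D, t * log (cosh (π * t / (2 * β)) / sinh (π * t / (2 * β))))
      ≤ ∫ t in Ioi D, 4 * (t * exp (-(π / β * t))) := by
        refine setIntegral_mono_of_nonneg (fun t ht => ?_) (fun t ht => ?_)
          ((integrableOn_Ioi_mul_exp_neg_mul hc hD).const_mul 4)
        · exact mul_nonneg (hD.trans ht.le) (log_cosh_div_sinh_nonneg (by linarith [hu t ht]))
        · rw [mul_left_comm]
          refine mul_le_mul_of_nonneg_left ?_ (hD.trans ht.le)
          have harg : π / β * t = 2 * (π * t / (2 * β)) := by field_simp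
          rw [harg]
          exact log_cosh_div_sinh_le (by linarith [hu t ht, log_two_lt_d9])
    _ = 4 * (β * D / π + β ^ 2 / π ^ 2) * exp (-π * D / β) := by
        rw [integral_const_mul, integral_Ioi_mul_exp_neg_mul hc hD]
        field_simp

/-- For `β > 0` and `D ≥ 1` with `πD/(2β) ≥ 1`,
`∫_D^∞ t log(coth(πt/(2β))) dt ≤ 4(βD/π + β²/π²) e^{−πD/β}`. -/
theorem integral_tail_log_coth_bound (β D : ℝ) (hβ : 0 < β) (hD : 1 ≤ D)
    (hπD : 1 ≤ π * D / (2 * β)) :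
    (∫ t in Set.Ioi D, t * Real.log (Real.cosh (π * t / (2 * β)) / Real.sinh (π * t / (2 * β)))) ≤
      4 * (β * D / π + β ^ 2 / π ^ 2) * Real.exp (-π * D / β) :=
  integral_tail_log_coth_bound_general β D hβ hπD
end
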